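/- arXiv:2202.08389 — 4 statements merged into one kernel-verified Lean document; each statement's English description precedes it below -/
import Mathlib

section
/- Let μ, ν be distinct indices that either both lie in {1,…,k} or both lie in {k+1,…,n}, and let h : ℝ^d → ℝ be a linear functional such that h(a_σ) = 0 for every σ ∈ {1,…,n} with σ ∉ {μ, ν}, and such that h does not vanish identically on the ℝ-span V of a_1,…,a_n. Then h(a_μ)·h(a_ν) < 0; in particular a_μ and a_ν lie strictly on opposite sides of the hyperplane ker h, so ker h contains no facet of Δ(A). (The second assertion in the proof of Lemma 2.12.) -/
/-! Applying `h` to the relation `∑ ℓs σ • a σ = 0` kills every term except those at `μ` and `ν`,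
leaving `ℓs μ · h(a_μ) + ℓs ν · h(a_ν) = 0`. Since `μ, ν` lie on the same side of `k`, the
coefficients `ℓs μ, ℓs ν` have the same sign, and `h(a_μ), h(a_ν)` are not both zero because `h`
does not vanish on the span. Hence they are nonzero with opposite signs. -/

theorem Int.cast_sum_smul_eq_zero {ι κ R : Type*} [Fintype ι] [Ring R]
    {c : ι → ℤ} {a : ι → κ → ℤ} (hrel : ∑ i, c i • a i = 0) :
    ∑ i, (c i : R) • (fun j => (a i j : R)) = 0 := by
  funext j
  have hj := congrArg (Int.cast (R := R)) (congrFun hrel j)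
  simpa [Finset.sum_apply, zsmul_eq_mul] using hj

theorem LinearMap.mul_add_mul_eq_zero_of_sum_smul_eq_zero {R M ι : Type*} [CommSemiring R]
    [AddCommMonoid M] [Module R M] [Fintype ι] (f : M →ₗ[R] R) {v : ι → M} {c : ι → R}
    (hrel : ∑ i, c i • v i = 0) {μ ν : ι} (hμν : μ ≠ ν)
    (hf : ∀ σ, σ ≠ μ → σ ≠ ν → f (v σ) = 0) :
    c μ * f (v μ) + c ν * f (v ν) = 0 := by
  have hsum := congrArg f hrel
  simp only [map_sum, map_smul, smul_eq_mul, map_zero] at hsum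
  rwa [Fintype.sum_eq_add μ ν hμν fun σ hσ => by rw [hf σ hσ.1 hσ.2, mul_zero]] at hsum

theorem LinearMap.exists_apply_ne_zero_of_exists_mem_span {R M N ι : Type*} [Semiring R]
    [AddCommMonoid M] [Module R M] [AddCommMonoid N] [Module R N] (f : M →ₗ[R] N) {v : ι → M}
    (h : ∃ x ∈ Submodule.span R (Set.range v), f x ≠ 0) : ∃ i, f (v i) ≠ 0 := by
  by_contra! hzero
  obtain ⟨x, hx, hfx⟩ := h
  have hle : Submodule.span R (Set.range v) ≤ LinearMap.ker f :=
    Submodule.span_le.2 (Set.range_subset_iff.2 hzero)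
  exact hfx (hle hx)

theorem mul_neg_of_pos_mul_add_pos_mul_eq_zero {K : Type*} [CommRing K] [LinearOrder K]
    [IsStrictOrderedRing K] {p q x y : K} (hp : 0 < p) (hq : 0 < q) (hrel : p * x + q * y = 0)
    (hxy : x ≠ 0 ∨ y ≠ 0) : x * y < 0 := by
  have hy : y ≠ 0 := by
    rintro rfl
    simp_all [hp.ne']
  have hpxy : p * (x * y) = -(q * y ^ 2) := by linear_combination y * hrel
  have : 0 < q * y ^ 2 := by positivity
  exact neg_of_mul_neg_right (by linarith) hp.le

theorem stmt_4_general (d n k : ℕ)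
    (a : Fin n → Fin d → ℤ)
    (aR : Fin n → Fin d → ℝ) (haR : ∀ μ i, aR μ i = (a μ i : ℝ))
    (ℓ : Fin n → ℤ) (hℓpos : ∀ μ, 0 < ℓ μ)
    (ℓs : Fin n → ℤ) (hℓs : ∀ μ : Fin n, ℓs μ = if (μ : ℕ) < k then ℓ μ else -ℓ μ)
    (hlat : ∀ l : Fin n → ℤ, (∑ μ, l μ • a μ) = 0 ↔ ∃ z : ℤ, l = z • ℓs)
    (μ ν : Fin n) (hμν : μ ≠ ν)
    (hboth : ((μ : ℕ) < k ∧ (ν : ℕ) < k) ∨ (k ≤ (μ : ℕ) ∧ k ≤ (ν : ℕ)))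
    (h : (Fin d → ℝ) →ₗ[ℝ] ℝ)
    (hvanish : ∀ σ : Fin n, σ ≠ μ → σ ≠ ν → h (aR σ) = 0)
    (hnontriv : ∃ x ∈ Submodule.span ℝ (Set.range aR), h x ≠ 0) :
    h (aR μ) * h (aR ν) < 0 := by
  have hcast : aR = fun σ i => (a σ i : ℝ) := funext fun σ => funext (haR σ)
  have hrel : ∑ σ, (ℓs σ : ℝ) • aR σ = 0 :=
    hcast ▸ Int.cast_sum_smul_eq_zero ((hlat ℓs).2 ⟨1, (one_smul ℤ ℓs).symm⟩)
  have hpair := h.mul_add_mul_eq_zero_of_sum_smul_eq_zero hrel hμν hvanish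
  have hpos : (ℓ μ : ℝ) * h (aR μ) + (ℓ ν : ℝ) * h (aR ν) = 0 := by
    rcases hboth with ⟨hμk, hνk⟩ | ⟨hμk, hνk⟩
    · simpa only [hℓs, if_pos hμk, if_pos hνk] using hpair
    · simp only [hℓs, if_neg hμk.not_gt, if_neg hνk.not_gt, Int.cast_neg] at hpair
      linarith
  have hne : h (aR μ) ≠ 0 ∨ h (aR ν) ≠ 0 := by
    obtain ⟨σ, hσ⟩ := h.exists_apply_ne_zero_of_exists_mem_span hnontriv
    by_contra! hzero
    rcases eq_or_ne σ μ with rfl | hσμ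
    · exact hσ hzero.1
    rcases eq_or_ne σ ν with rfl | hσν
    · exact hσ hzero.2
    exact hσ (hvanish σ hσμ hσν)
  exact mul_neg_of_pos_mul_add_pos_mul_eq_zero (Int.cast_pos.2 (hℓpos μ))
    (Int.cast_pos.2 (hℓpos ν)) hpos hne

/-- Lemma 2.12 (second assertion): for distinct μ, ν both in {1,…,k} or both in
{k+1,…,n}, a linear functional vanishing on all a_σ with σ ∉ {μ,ν}, but not
identically on V, takes values of strictly opposite signs at a_μ and a_ν. -/
theorem stmt_4 (d n k : ℕ) (hd : 1 ≤ d) (hn : 2 ≤ n) (hk1 : 1 ≤ k) (hkn : k ≤ n)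
    (a : Fin n → Fin d → ℤ)
    (aR : Fin n → Fin d → ℝ) (haR : ∀ μ i, aR μ i = (a μ i : ℝ))
    (hdim : Module.finrank ℝ (Submodule.span ℝ (Set.range aR)) = n - 1)
    (hindep : ∀ μ₀ : Fin n,
      LinearIndependent ℝ (fun ν : {ν : Fin n // ν ≠ μ₀} => aR ν.1))
    (ℓ : Fin n → ℤ) (hℓpos : ∀ μ, 0 < ℓ μ)
    (ℓs : Fin n → ℤ) (hℓs : ∀ μ : Fin n, ℓs μ = if (μ : ℕ) < k then ℓ μ else -ℓ μ)
    (hlat : ∀ l : Fin n → ℤ, (∑ μ, l μ • a μ) = 0 ↔ ∃ z : ℤ, l = z • ℓs)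
    (μ ν : Fin n) (hμν : μ ≠ ν)
    (hboth : ((μ : ℕ) < k ∧ (ν : ℕ) < k) ∨ (k ≤ (μ : ℕ) ∧ k ≤ (ν : ℕ)))
    (h : (Fin d → ℝ) →ₗ[ℝ] ℝ)
    (hvanish : ∀ σ : Fin n, σ ≠ μ → σ ≠ ν → h (aR σ) = 0)
    (hnontriv : ∃ x ∈ Submodule.span ℝ (Set.range aR), h x ≠ 0) :
    h (aR μ) * h (aR ν) < 0 :=
  stmt_4_general d n k a aR haR ℓ hℓpos ℓs hℓs hlat μ ν hμν hboth h hvanish hnontriv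
end

section
/- The set E'_β is finite, and ∑_{v ∈ E'_β} m_v = ∑_{i=1}^k ℓ_i, where for v ∈ E'_β the multiplicity m_v is the number of indices i ∈ {1,…,k} such that v_i is a nonnegative integer. (Equation (1.4).) -/
/-!
The solutions of `∑ v_μ a_μ = β` form a complex line `v₀ + ℂ ℓ`, because the kernel is spanned by
the relation vector `ℓ` (a dimension count over `ℝ`, then real and imaginary parts). Translating a
point by `ℓ` raises each `⌊v_i / ℓ_i⌋` with `i ≤ k` by one, and `v ∈ E'_β` says exactly that the
least of these floors is `0`, a non-integral coordinate counting as `+∞`. Hence for each `i ≤ k` and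
each residue `r < ℓ_i` exactly one point of `E'_β` has `v_i ∈ ℕ` with `v_i ≡ r (mod ℓ_i)`, and
double counting the pairs `(v, i)` with `v_i ∈ ℕ` gives `∑ m_v = ∑ ℓ_i`.
-/

open Finset

section

variable {ι : Type*}

theorem exists_smul_eq_of_finrank_span_add_one_eq_card {𝕜 M : Type*} [Field 𝕜]
    [AddCommGroup M] [Module 𝕜 M] [Fintype ι] {a : ι → M}
    (hdim : Module.finrank 𝕜 (Submodule.span 𝕜 (Set.range a)) + 1 = Fintype.card ι)
    {u : ι → 𝕜} (hu : ∑ μ, u μ • a μ = 0) (hu0 : u ≠ 0) {x : ι → 𝕜}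
    (hx : ∑ μ, x μ • a μ = 0) : ∃ c : 𝕜, c • u = x := by
  set f := Fintype.linearCombination 𝕜 a
  have hker : Module.finrank 𝕜 (LinearMap.ker f) = 1 := by
    have := LinearMap.finrank_range_add_finrank_ker f
    rw [Fintype.range_linearCombination, Module.finrank_fintype_fun_eq_card] at this
    omega
  have hspan : Submodule.span 𝕜 {u} = LinearMap.ker f :=
    Submodule.eq_of_le_of_finrank_eq
      ((Submodule.span_singleton_le_iff_mem _ _).2 (by simpa [f, Fintype.linearCombination_apply]))
      (by rw [finrank_span_singleton hu0, hker])
  have hxker : x ∈ Submodule.span 𝕜 {u} := by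
    rw [hspan, LinearMap.mem_ker, Fintype.linearCombination_apply, hx]
  exact Submodule.mem_span_singleton.1 hxker

theorem exists_complex_smul_eq_of_real {κ : Type*} [Fintype ι] {b : ι → κ → ℝ} {u : ι → ℝ}
    (h : ∀ x : ι → ℝ, ∑ μ, x μ • b μ = 0 → ∃ c : ℝ, c • u = x) {z : ι → ℂ}
    (hz : ∑ μ, z μ • (fun i => (b μ i : ℂ)) = 0) :
    ∃ c : ℂ, c • (fun μ => (u μ : ℂ)) = z := by
  have hre : ∑ μ, (z μ).re • b μ = 0 := by
    funext i
    simpa [Complex.re_sum] using congrArg Complex.re (congrFun hz i)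
  have him : ∑ μ, (z μ).im • b μ = 0 := by
    funext i
    simpa [Complex.im_sum] using congrArg Complex.im (congrFun hz i)
  obtain ⟨c₁, hc₁⟩ := h _ hre
  obtain ⟨c₂, hc₂⟩ := h _ him
  refine ⟨⟨c₁, c₂⟩, funext fun μ => Complex.ext ?_ ?_⟩
  · simp [← congrFun hc₁ μ]
  · simp [← congrFun hc₂ μ]

theorem sum_intCast_smul_eq_zero (R : Type*) [Ring R] {κ : Type*} [Fintype ι] {l : ι → ℤ}
    {a : ι → κ → ℤ} (h : ∑ μ, l μ • a μ = 0) :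
    ∑ μ, (l μ : R) • (fun i => (a μ i : R)) = 0 := by
  funext i
  have hi : ∑ μ, l μ * a μ i = 0 := by simpa using congrFun h i
  simpa using congrArg (Int.cast : ℤ → R) hi

def complexLine (p L : ι → ℂ) : Set (ι → ℂ) :=
  Set.range fun t : ℂ => p + t • L

theorem add_smul_mem_complexLine {p L w : ι → ℂ} (hw : w ∈ complexLine p L) (c : ℂ) :
    w + c • L ∈ complexLine p L := by
  obtain ⟨t, rfl⟩ := hw
  exact ⟨t + c, by simp only [add_smul, add_assoc]⟩

theorem eq_add_div_smul_of_mem_complexLine {p L v w : ι → ℂ} (hv : v ∈ complexLine p L)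
    (hw : w ∈ complexLine p L) {i : ι} (hi : L i ≠ 0) :
    v = w + ((v i - w i) / L i) • L := by
  obtain ⟨t, rfl⟩ := hv
  obtain ⟨t', rfl⟩ := hw
  funext j
  simp only [Pi.add_apply, Pi.smul_apply, smul_eq_mul]
  field_simp
  ring

theorem sum_smul_eq_iff_mem_complexLine {M : Type*} [AddCommGroup M] [Module ℂ M] [Fintype ι]
    {a : ι → M} {L : ι → ℂ} (hker : ∀ x : ι → ℂ, ∑ μ, x μ • a μ = 0 → ∃ c : ℂ, c • L = x)
    (hL : ∑ μ, L μ • a μ = 0) {p : ι → ℂ} {β : M} (hp : ∑ μ, p μ • a μ = β) {v : ι → ℂ} :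
    ∑ μ, v μ • a μ = β ↔ v ∈ complexLine p L := by
  constructor
  · intro hv
    obtain ⟨c, hc⟩ := hker (v - p) (by simp [sub_smul, hv, hp])
    exact ⟨c, show p + c • L = v by rw [hc, add_sub_cancel]⟩
  · rintro ⟨t, rfl⟩
    simp [add_smul, Finset.sum_add_distrib, hp, mul_smul, ← Finset.smul_sum, hL]

/-- `⌊z / ℓ⌋` for `z ∈ ℤ` and `ℓ > 0` (integer division rounds down for positive divisors), and `⊤`
off the integers, so that non-integral coordinates never obstruct membership in `E'_β`. -/
noncomputable def intFloorDiv (ℓ : ℤ) (z : ℂ) : WithTop ℤ :=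
  open Classical in
  if h : ∃ c : ℤ, (c : ℂ) = z then ↑(h.choose / ℓ) else ⊤

theorem intFloorDiv_intCast (ℓ c : ℤ) : intFloorDiv ℓ c = ↑(c / ℓ) := by
  have h : ∃ c' : ℤ, (c' : ℂ) = c := ⟨c, rfl⟩
  rw [intFloorDiv, dif_pos h, Int.cast_injective h.choose_spec]

theorem intFloorDiv_of_forall_ne (ℓ : ℤ) {z : ℂ} (hz : ∀ c : ℤ, (c : ℂ) ≠ z) :
    intFloorDiv ℓ z = ⊤ :=
  dif_neg (not_exists.2 hz)

theorem intFloorDiv_add_mul {ℓ : ℤ} (hℓ : ℓ ≠ 0) (z : ℂ) (s : ℤ) :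
    intFloorDiv ℓ (z + s * ℓ) = intFloorDiv ℓ z + s := by
  by_cases hz : ∃ c : ℤ, (c : ℂ) = z
  · obtain ⟨c, rfl⟩ := hz
    rw [← Int.cast_mul, ← Int.cast_add, intFloorDiv_intCast, intFloorDiv_intCast,
      Int.add_mul_ediv_right _ _ hℓ, WithTop.coe_add]
  · push Not at hz
    rw [intFloorDiv_of_forall_ne _ hz, WithTop.top_add, intFloorDiv_of_forall_ne]
    intro c hc
    exact hz (c - s * ℓ) (by push_cast; rw [hc]; ring)

theorem intFloorDiv_eq_zero_iff {ℓ : ℤ} (hℓ : 0 < ℓ) {z : ℂ} :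
    intFloorDiv ℓ z = 0 ↔ ∃ b : ℕ, (b : ℤ) < ℓ ∧ z = b := by
  by_cases hz : ∃ c : ℤ, (c : ℂ) = z
  · obtain ⟨c, rfl⟩ := hz
    rw [intFloorDiv_intCast, ← WithTop.coe_zero, WithTop.coe_inj, Int.ediv_eq_iff_of_pos hℓ]
    simp only [zero_mul, zero_add, ← Int.cast_natCast (R := ℂ), Int.cast_inj]
    constructor
    · rintro ⟨h0, hc⟩
      exact ⟨c.toNat, by omega, by omega⟩
    · rintro ⟨b, hb, rfl⟩
      omega
  · push Not at hz
    rw [intFloorDiv_of_forall_ne _ hz]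
    simp only [WithTop.top_ne_zero, false_iff, not_exists, not_and]
    intro b _ hb
    exact hz b (by rw [hb]; push_cast; rfl)

theorem zero_le_intFloorDiv_iff {ℓ : ℤ} (hℓ : 0 < ℓ) {z : ℂ} :
    0 ≤ intFloorDiv ℓ z ↔ ∀ m : ℤ, m < 0 → z ≠ m := by
  by_cases hz : ∃ c : ℤ, (c : ℂ) = z
  · obtain ⟨c, rfl⟩ := hz
    rw [intFloorDiv_intCast, ← WithTop.coe_zero, WithTop.coe_le_coe, Int.ediv_nonneg_iff_of_pos hℓ]
    simp only [ne_eq, Int.cast_inj]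
    exact ⟨fun h m hm => by omega, fun h => not_lt.1 fun hc => h c hc rfl⟩
  · push Not at hz
    rw [intFloorDiv_of_forall_ne _ hz]
    exact ⟨fun _ m _ h => hz m h.symm, fun _ => le_top⟩

noncomputable def minIntFloorDiv (K : Finset ι) (ℓ : ι → ℤ) (v : ι → ℂ) : WithTop ℤ :=
  K.inf fun j => intFloorDiv (ℓ j) (v j)

theorem minIntFloorDiv_eq_zero_iff {K : Finset ι} {ℓ : ι → ℤ} (hℓ : ∀ j ∈ K, 0 < ℓ j)
    {v : ι → ℂ} :
    minIntFloorDiv K ℓ v = 0 ↔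
      (∃ j ∈ K, ∃ b : ℕ, (b : ℤ) < ℓ j ∧ v j = b) ∧ ∀ j ∈ K, ∀ m : ℤ, m < 0 → v j ≠ m := by
  rw [le_antisymm_iff, minIntFloorDiv, Finset.inf_le_iff (WithTop.coe_lt_top 0), Finset.le_inf_iff]
  constructor
  · rintro ⟨⟨j, hj, hj0⟩, hK⟩
    refine ⟨⟨j, hj, (intFloorDiv_eq_zero_iff (hℓ j hj)).1 (le_antisymm hj0 (hK j hj))⟩,
      fun j hj => (zero_le_intFloorDiv_iff (hℓ j hj)).1 (hK j hj)⟩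
  · rintro ⟨⟨j, hj, hj0⟩, hK⟩
    exact ⟨⟨j, hj, ((intFloorDiv_eq_zero_iff (hℓ j hj)).2 hj0).le⟩,
      fun j hj => (zero_le_intFloorDiv_iff (hℓ j hj)).2 (hK j hj)⟩

theorem minIntFloorDiv_add_intCast_smul {K : Finset ι} {ℓ : ι → ℤ} (hℓ : ∀ j ∈ K, ℓ j ≠ 0)
    {L : ι → ℂ} (hL : ∀ j ∈ K, L j = ℓ j) (w : ι → ℂ) (s : ℤ) :
    minIntFloorDiv K ℓ (w + (s : ℂ) • L) = minIntFloorDiv K ℓ w + s := by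
  rw [minIntFloorDiv, minIntFloorDiv,
    Finset.apply_inf_eq_inf_comp_of_linearOrder (· + (s : WithTop ℤ))
      (fun _ _ h => add_le_add_left h _) (WithTop.top_add _)]
  refine Finset.inf_congr rfl fun j hj => ?_
  simp only [Pi.add_apply, Pi.smul_apply, smul_eq_mul, hL j hj, Function.comp_apply]
  exact intFloorDiv_add_mul (hℓ j hj) (w j) s

theorem existsUnique_mem_complexLine_emod_eq {K : Finset ι} {ℓ : ι → ℤ} (hℓ : ∀ j ∈ K, 0 < ℓ j)
    {p L : ι → ℂ} (hL : ∀ j ∈ K, L j = ℓ j) {i : ι} (hi : i ∈ K) {r : ℤ} (hr0 : 0 ≤ r)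
    (hr : r < ℓ i) :
    ∃! v, (v ∈ complexLine p L ∧ minIntFloorDiv K ℓ v = 0) ∧
      ∃ b : ℕ, v i = b ∧ (b : ℤ) % ℓ i = r := by
  have hℓ0 : ∀ j ∈ K, ℓ j ≠ 0 := fun j hj => (hℓ j hj).ne'
  have hLi : L i ≠ 0 := by rw [hL i hi]; exact_mod_cast hℓ0 i hi
  set w := p + ((r - p i) / L i) • L
  have hw : w ∈ complexLine p L := ⟨_, rfl⟩
  have hwi : w i = r := by
    simp only [w, Pi.add_apply, Pi.smul_apply, smul_eq_mul, div_mul_cancel₀ _ hLi]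
    ring
  obtain ⟨m, hm, hm0⟩ : ∃ m : ℤ, minIntFloorDiv K ℓ w = m ∧ m ≤ 0 := by
    have hle : minIntFloorDiv K ℓ w ≤ (0 : ℤ) :=
      calc minIntFloorDiv K ℓ w ≤ intFloorDiv (ℓ i) (w i) := Finset.inf_le hi
        _ = (0 : ℤ) := by rw [hwi, intFloorDiv_intCast, Int.ediv_eq_zero_of_lt hr0 hr]
    obtain ⟨m, hm⟩ := WithTop.ne_top_iff_exists.1 (ne_top_of_le_ne_top WithTop.coe_ne_top hle)
    exact ⟨m, hm.symm, WithTop.coe_le_coe.1 (hm ▸ hle)⟩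
  have hshift := minIntFloorDiv_add_intCast_smul hℓ0 hL w
  have hbase : (0 : ℤ) ≤ r + -m * ℓ i := by nlinarith [hℓ i hi]
  refine ⟨w + ((-m : ℤ) : ℂ) • L,
    ⟨⟨add_smul_mem_complexLine hw _, ?_⟩, (r + -m * ℓ i).toNat, ?_, ?_⟩, ?_⟩
  · rw [hshift, hm, ← WithTop.coe_add, add_neg_cancel, WithTop.coe_zero]
  · simp only [Pi.add_apply, Pi.smul_apply, smul_eq_mul, hwi, hL i hi]
    exact_mod_cast (Int.toNat_of_nonneg hbase).symm
  · rw [Int.toNat_of_nonneg hbase, Int.add_mul_emod_self_right, Int.emod_eq_of_lt hr0 hr]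
  · rintro v ⟨⟨hv, hv0⟩, b, hvi, hb⟩
    have hvw : v = w + (((b : ℤ) / ℓ i : ℤ) : ℂ) • L := by
      rw [eq_add_div_smul_of_mem_complexLine hv hw hLi, hvi, hwi, hL i hi]
      congr 2
      have hdiv : (b : ℤ) - r = (b / ℓ i) * ℓ i := by
        linarith [hb ▸ Int.emod_add_ediv_mul (b : ℤ) (ℓ i)]
      rw [div_eq_iff (by exact_mod_cast hℓ0 i hi)]
      exact_mod_cast hdiv
    rw [hvw, hshift, hm, ← WithTop.coe_add, ← WithTop.coe_zero, WithTop.coe_inj] at hv0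
    rw [hvw, show (b : ℤ) / ℓ i = -m by omega]

/-- `E'_β`, for the solution line `p + ℂ L` and `K` the indices `i ≤ k`. -/
def admissiblePoints (K : Finset ι) (ℓ : ι → ℤ) (p L : ι → ℂ) : Set (ι → ℂ) :=
  {v ∈ complexLine p L | minIntFloorDiv K ℓ v = 0}

section admissiblePoints

variable {K : Finset ι} {ℓ : ι → ℤ} {p L : ι → ℂ}

theorem bijOn_floor_re_emod (hℓ : ∀ j ∈ K, 0 < ℓ j) (hL : ∀ j ∈ K, L j = ℓ j) {i : ι}
    (hi : i ∈ K) :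
    Set.BijOn (fun v => ⌊(v i).re⌋ % ℓ i) {v ∈ admissiblePoints K ℓ p L | ∃ b : ℕ, v i = b}
      (Set.Ico 0 (ℓ i)) := by
  -- `⌊(v i).re⌋` reads off the natural number `v i` by a choice-free formula.
  have hfloor {v : ι → ℂ} {b : ℕ} (hvi : v i = b) : ⌊(v i).re⌋ = b := by
    rw [hvi, Complex.natCast_re, Int.floor_natCast]
  refine ⟨fun v ⟨_, b, hvi⟩ => ?_, fun v ⟨hv, b, hvi⟩ v' ⟨hv', b', hv'i⟩ hvv' => ?_, fun r hr => ?_⟩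
  · simp only [hfloor hvi]
    exact ⟨Int.emod_nonneg _ (hℓ i hi).ne', Int.emod_lt_of_pos _ (hℓ i hi)⟩
  · simp only [hfloor hvi, hfloor hv'i] at hvv'
    exact (existsUnique_mem_complexLine_emod_eq hℓ hL hi (Int.emod_nonneg _ (hℓ i hi).ne')
      (Int.emod_lt_of_pos _ (hℓ i hi))).unique ⟨hv, b, hvi, rfl⟩ ⟨hv', b', hv'i, hvv'.symm⟩
  · obtain ⟨v, ⟨hv, b, hvi, hb⟩, -⟩ :=
      existsUnique_mem_complexLine_emod_eq (p := p) hℓ hL hi hr.1 hr.2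
    exact ⟨v, ⟨hv, b, hvi⟩, by simp only [hfloor hvi, hb]⟩

theorem admissiblePoints_finite (hℓ : ∀ j ∈ K, 0 < ℓ j) (hL : ∀ j ∈ K, L j = ℓ j) :
    (admissiblePoints K ℓ p L).Finite := by
  refine (K.finite_toSet.biUnion fun i hi =>
    (bijOn_floor_re_emod (p := p) hℓ hL hi).finite_iff_finite.2 (Set.finite_Ico _ _)).subset ?_
  intro v hv
  obtain ⟨j, hj, b, -, hvj⟩ := ((minIntFloorDiv_eq_zero_iff hℓ).1 hv.2).1
  exact Set.mem_biUnion hj ⟨hv, b, hvj⟩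

theorem finsum_ncard_admissiblePoints (hℓ : ∀ j ∈ K, 0 < ℓ j) (hL : ∀ j ∈ K, L j = ℓ j) :
    ∑ᶠ v ∈ admissiblePoints K ℓ p L, (({i | i ∈ K ∧ ∃ b : ℕ, v i = b} : Set ι).ncard : ℤ) =
      ∑ i ∈ K, ℓ i := by
  classical
  set r : (ι → ℂ) → ι → Prop := fun v i => ∃ b : ℕ, v i = b
  have hS := admissiblePoints_finite hℓ hL (p := p)
  rw [← hS.coe_toFinset, finsum_mem_coe_finset]
  calc ∑ v ∈ hS.toFinset, (({i | i ∈ K ∧ r v i} : Set ι).ncard : ℤ)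
      = ((∑ v ∈ hS.toFinset, #(K.bipartiteAbove r v) : ℕ) : ℤ) := by
        push_cast
        simp only [← Set.ncard_coe_finset, coe_bipartiteAbove]
    _ = ((∑ i ∈ K, #(hS.toFinset.bipartiteBelow r i) : ℕ) : ℤ) := by
        rw [sum_card_bipartiteAbove_eq_sum_card_bipartiteBelow]
    _ = ∑ i ∈ K, ℓ i := by
        push_cast
        refine Finset.sum_congr rfl fun i hi => ?_
        rw [← Set.ncard_coe_finset, coe_bipartiteBelow]
        simp only [Set.Finite.mem_toFinset]
        rw [(bijOn_floor_re_emod hℓ hL hi).ncard_eq, ← Finset.coe_Ico, Set.ncard_coe_finset,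
          Int.card_Ico, sub_zero, Int.toNat_of_nonneg (hℓ i hi).le]

end admissiblePoints

end

theorem stmt_10_general (d n k : ℕ) (hn : 2 ≤ n)
    (a : Fin n → Fin d → ℤ)
    (aR : Fin n → Fin d → ℝ) (haR : ∀ μ i, aR μ i = (a μ i : ℝ))
    (hdim : Module.finrank ℝ (Submodule.span ℝ (Set.range aR)) = n - 1)
    (ℓ : Fin n → ℤ) (hℓpos : ∀ μ, 0 < ℓ μ)
    (ℓs : Fin n → ℤ) (hℓs : ∀ μ : Fin n, ℓs μ = if (μ : ℕ) < k then ℓ μ else -ℓ μ)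
    (hlat : ∀ l : Fin n → ℤ, (∑ μ, l μ • a μ) = 0 ↔ ∃ z : ℤ, l = z • ℓs)
    (aC : Fin n → Fin d → ℂ) (haC : ∀ μ i, aC μ i = (a μ i : ℂ))
    (E E' : (Fin d → ℂ) → Set (Fin n → ℂ))
    (hE : ∀ (γ : Fin d → ℂ) (v : Fin n → ℂ), v ∈ E γ ↔
      (∑ μ, v μ • aC μ) = γ ∧
        ∃ i : Fin n, (i : ℕ) < k ∧ ∃ b : ℕ, (b : ℤ) < ℓ i ∧ v i = (b : ℂ))
    (hE' : ∀ (γ : Fin d → ℂ) (v : Fin n → ℂ), v ∈ E' γ ↔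
      v ∈ E γ ∧ ∀ i : Fin n, (i : ℕ) < k → ∀ m : ℤ, m < 0 → v i ≠ (m : ℂ))
    (β : Fin d → ℂ) (hβ : β ∈ Submodule.span ℂ (Set.range aC))
    : (E' β).Finite ∧
      (∑ᶠ v ∈ E' β,
          (({i : Fin n | (i : ℕ) < k ∧ ∃ b : ℕ, v i = (b : ℂ)} : Set (Fin n)).ncard : ℤ)) =
        ∑ μ ∈ Finset.univ.filter (fun μ : Fin n => (μ : ℕ) < k), ℓ μ := by
  set K := Finset.univ.filter fun μ : Fin n => (μ : ℕ) < k
  set L : Fin n → ℂ := fun μ => (ℓs μ : ℂ)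
  have hℓK : ∀ j ∈ K, 0 < ℓ j := fun j _ => hℓpos j
  have hLK : ∀ j ∈ K, L j = ℓ j := fun j hj => by simp [L, hℓs j, (mem_filter.1 hj).2]
  have hℓs0 : ℓs ≠ 0 := fun h => by
    have := congrFun h ⟨0, by omega⟩
    rw [hℓs, Pi.zero_apply] at this
    split_ifs at this <;> linarith [hℓpos ⟨0, by omega⟩]
  have hrel : ∑ μ, ℓs μ • a μ = 0 := (hlat ℓs).2 ⟨1, (one_smul ℤ ℓs).symm⟩
  have haR' : aR = fun μ i => (a μ i : ℝ) := funext fun μ => funext (haR μ)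
  have haC' : aC = fun μ i => (a μ i : ℂ) := funext fun μ => funext (haC μ)
  have hkerR : ∀ x : Fin n → ℝ, ∑ μ, x μ • aR μ = 0 → ∃ c : ℝ, c • (fun μ => (ℓs μ : ℝ)) = x :=
    fun x => exists_smul_eq_of_finrank_span_add_one_eq_card (by rw [hdim, Fintype.card_fin]; omega)
      (haR' ▸ sum_intCast_smul_eq_zero ℝ hrel) (by simpa [funext_iff] using hℓs0)
  have hkerC : ∀ x : Fin n → ℂ, ∑ μ, x μ • aC μ = 0 → ∃ c : ℂ, c • L = x := fun x hx => by
    simpa [L] using exists_complex_smul_eq_of_real hkerR (by simpa [haR', haC'] using hx)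
  obtain ⟨v0, hv0⟩ := (Submodule.mem_span_range_iff_exists_fun ℂ).1 hβ
  have hE'β : E' β = admissiblePoints K ℓ v0 L := by
    ext v
    rw [hE', hE, admissiblePoints, Set.mem_sep_iff,
      ← sum_smul_eq_iff_mem_complexLine hkerC (haC' ▸ sum_intCast_smul_eq_zero ℂ hrel) hv0,
      minIntFloorDiv_eq_zero_iff hℓK]
    simp [K, and_assoc]
  rw [hE'β]
  refine ⟨admissiblePoints_finite hℓK hLK, ?_⟩
  simpa [K] using finsum_ncard_admissiblePoints hℓK hLK

/-- Equation (1.4): E'_β is finite and ∑_{v ∈ E'_β} m_v = ∑_{i=1}^k ℓ_i. -/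
theorem stmt_10 (d n k : ℕ) (hd : 1 ≤ d) (hn : 2 ≤ n) (hk1 : 1 ≤ k) (hkn : k ≤ n)
    (a : Fin n → Fin d → ℤ)
    (aR : Fin n → Fin d → ℝ) (haR : ∀ μ i, aR μ i = (a μ i : ℝ))
    (hdim : Module.finrank ℝ (Submodule.span ℝ (Set.range aR)) = n - 1)
    (hindep : ∀ μ₀ : Fin n,
      LinearIndependent ℝ (fun ν : {ν : Fin n // ν ≠ μ₀} => aR ν.1))
    (ℓ : Fin n → ℤ) (hℓpos : ∀ μ, 0 < ℓ μ)
    (ℓs : Fin n → ℤ) (hℓs : ∀ μ : Fin n, ℓs μ = if (μ : ℕ) < k then ℓ μ else -ℓ μ)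
    (hlat : ∀ l : Fin n → ℤ, (∑ μ, l μ • a μ) = 0 ↔ ∃ z : ℤ, l = z • ℓs)
    (aC : Fin n → Fin d → ℂ) (haC : ∀ μ i, aC μ i = (a μ i : ℂ))
    (E E' : (Fin d → ℂ) → Set (Fin n → ℂ))
    (hE : ∀ (γ : Fin d → ℂ) (v : Fin n → ℂ), v ∈ E γ ↔
      (∑ μ, v μ • aC μ) = γ ∧
        ∃ i : Fin n, (i : ℕ) < k ∧ ∃ b : ℕ, (b : ℤ) < ℓ i ∧ v i = (b : ℂ))
    (hE' : ∀ (γ : Fin d → ℂ) (v : Fin n → ℂ), v ∈ E' γ ↔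
      v ∈ E γ ∧ ∀ i : Fin n, (i : ℕ) < k → ∀ m : ℤ, m < 0 → v i ≠ (m : ℂ))
    (β : Fin d → ℂ) (hβ : β ∈ Submodule.span ℂ (Set.range aC))
    : (E' β).Finite ∧
      (∑ᶠ v ∈ E' β,
          (({i : Fin n | (i : ℕ) < k ∧ ∃ b : ℕ, v i = (b : ℂ)} : Set (Fin n)).ncard : ℤ)) =
        ∑ μ ∈ Finset.univ.filter (fun μ : Fin n => (μ : ℕ) < k), ℓ μ :=
  stmt_10_general d n k hn a aR haR hdim ℓ hℓpos ℓs hℓs hlat aC haC E E' hE hE' β hβ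
end

section
/- Let v ∈ E'_β and put Z = {z ∈ ℤ : nsupp(v + z·ℓ) = nsupp(v)}. Then 0 ∈ Z and Z ⊆ ℤ_{≥0}, i.e. every z ∈ Z satisfies z ≥ 0. (The claim established in the Example of Section 6, showing that the canonical logarithm-free solution attached to v ∈ E'_β lies in ℂ[[x_0]][x^v] and has nonzero coefficient of x^v.) -/
/-! At an index `i ≤ k` with `v i = b ∈ {0, …, ℓᵢ - 1}`, a shift by `z ℓ` with `z < 0` makes
the `i`-th coordinate `b + z ℓᵢ ≤ b - ℓᵢ < 0` a negative integer, while `v i = b` itself is not one;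
so such a shift changes the negative-integer support of `v`. -/

/-- The paper's `nsupp w`. -/
def negIntSupport {ι : Type*} (w : ι → ℂ) : Set ι := {μ | ∃ m : ℤ, m < 0 ∧ w μ = m}

section

variable {ι : Type*} {w : ι → ℂ} {s : ι → ℤ} {i : ι} {b : ℕ}

lemma not_mem_negIntSupport_of_eq_natCast (hwi : w i = b) : i ∉ negIntSupport w := by
  rintro ⟨m, hm, hwm⟩
  have hbm : (b : ℤ) = m := by exact_mod_cast hwi.symm.trans hwm
  omega

lemma mem_negIntSupport_add_of_neg (hwi : w i = b) (hb : (b : ℤ) < s i) {z : ℤ} (hz : z < 0) :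
    i ∈ negIntSupport (fun μ => w μ + ((z * s μ : ℤ) : ℂ)) := by
  refine ⟨b + z * s i, by nlinarith, ?_⟩
  change w i + _ = _
  rw [hwi]
  push_cast
  rfl

theorem nonneg_of_negIntSupport_add_eq (hwi : w i = b) (hb : (b : ℤ) < s i) {z : ℤ}
    (h : negIntSupport (fun μ => w μ + ((z * s μ : ℤ) : ℂ)) = negIntSupport w) : 0 ≤ z := by
  by_contra! hz
  exact not_mem_negIntSupport_of_eq_natCast hwi (h ▸ mem_negIntSupport_add_of_neg hwi hb hz)

end

theorem stmt_13_general (d n k : ℕ)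
    (ℓ : Fin n → ℤ)
    (ℓs : Fin n → ℤ) (hℓs : ∀ μ : Fin n, ℓs μ = if (μ : ℕ) < k then ℓ μ else -ℓ μ)
    (aC : Fin n → Fin d → ℂ)
    (E E' : (Fin d → ℂ) → Set (Fin n → ℂ))
    (hE : ∀ (γ : Fin d → ℂ) (v : Fin n → ℂ), v ∈ E γ ↔
      (∑ μ, v μ • aC μ) = γ ∧
        ∃ i : Fin n, (i : ℕ) < k ∧ ∃ b : ℕ, (b : ℤ) < ℓ i ∧ v i = (b : ℂ))
    (hE' : ∀ (γ : Fin d → ℂ) (v : Fin n → ℂ), v ∈ E' γ ↔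
      v ∈ E γ ∧ ∀ i : Fin n, (i : ℕ) < k → ∀ m : ℤ, m < 0 → v i ≠ (m : ℂ))
    (β : Fin d → ℂ)
    (v : Fin n → ℂ) (hv : v ∈ E' β) :
    (0 : ℤ) ∈ {z : ℤ |
        {μ : Fin n | ∃ m : ℤ, m < 0 ∧ v μ + ((z * ℓs μ : ℤ) : ℂ) = (m : ℂ)} =
          {μ : Fin n | ∃ m : ℤ, m < 0 ∧ v μ = (m : ℂ)}} ∧
    ∀ z ∈ {z : ℤ |
        {μ : Fin n | ∃ m : ℤ, m < 0 ∧ v μ + ((z * ℓs μ : ℤ) : ℂ) = (m : ℂ)} =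
          {μ : Fin n | ∃ m : ℤ, m < 0 ∧ v μ = (m : ℂ)}}, 0 ≤ z := by
  refine ⟨by simp, fun z hz => ?_⟩
  obtain ⟨-, i, hik, b, hb, hvi⟩ := (hE β v).mp ((hE' β v).mp hv).1
  have hbi : (b : ℤ) < ℓs i := by rw [hℓs i, if_pos hik]; exact hb
  exact nonneg_of_negIntSupport_add_eq hvi hbi hz

/-- Example of Section 6: for v ∈ E'_β, the set Z = {z : nsupp(v+zℓ) = nsupp(v)} contains 0 and consists of nonnegative integers. -/
theorem stmt_13 (d n k : ℕ) (hd : 1 ≤ d) (hn : 2 ≤ n) (hk1 : 1 ≤ k) (hkn : k ≤ n)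
    (a : Fin n → Fin d → ℤ)
    (aR : Fin n → Fin d → ℝ) (haR : ∀ μ i, aR μ i = (a μ i : ℝ))
    (hdim : Module.finrank ℝ (Submodule.span ℝ (Set.range aR)) = n - 1)
    (hindep : ∀ μ₀ : Fin n,
      LinearIndependent ℝ (fun ν : {ν : Fin n // ν ≠ μ₀} => aR ν.1))
    (ℓ : Fin n → ℤ) (hℓpos : ∀ μ, 0 < ℓ μ)
    (ℓs : Fin n → ℤ) (hℓs : ∀ μ : Fin n, ℓs μ = if (μ : ℕ) < k then ℓ μ else -ℓ μ)
    (hlat : ∀ l : Fin n → ℤ, (∑ μ, l μ • a μ) = 0 ↔ ∃ z : ℤ, l = z • ℓs)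
    (aC : Fin n → Fin d → ℂ) (haC : ∀ μ i, aC μ i = (a μ i : ℂ))
    (E E' : (Fin d → ℂ) → Set (Fin n → ℂ))
    (hE : ∀ (γ : Fin d → ℂ) (v : Fin n → ℂ), v ∈ E γ ↔
      (∑ μ, v μ • aC μ) = γ ∧
        ∃ i : Fin n, (i : ℕ) < k ∧ ∃ b : ℕ, (b : ℤ) < ℓ i ∧ v i = (b : ℂ))
    (hE' : ∀ (γ : Fin d → ℂ) (v : Fin n → ℂ), v ∈ E' γ ↔
      v ∈ E γ ∧ ∀ i : Fin n, (i : ℕ) < k → ∀ m : ℤ, m < 0 → v i ≠ (m : ℂ))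
    (β : Fin d → ℂ) (hβ : β ∈ Submodule.span ℂ (Set.range aC))
    (v : Fin n → ℂ) (hv : v ∈ E' β) :
    (0 : ℤ) ∈ {z : ℤ |
        {μ : Fin n | ∃ m : ℤ, m < 0 ∧ v μ + ((z * ℓs μ : ℤ) : ℂ) = (m : ℂ)} =
          {μ : Fin n | ∃ m : ℤ, m < 0 ∧ v μ = (m : ℂ)}} ∧
    ∀ z ∈ {z : ℤ |
        {μ : Fin n | ∃ m : ℤ, m < 0 ∧ v μ + ((z * ℓs μ : ℤ) : ℂ) = (m : ℂ)} =
          {μ : Fin n | ∃ m : ℤ, m < 0 ∧ v μ = (m : ℂ)}}, 0 ≤ z :=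
  stmt_13_general d n k ℓ ℓs hℓs aC E E' hE hE' β v hv
end

section
/- For β ∈ V_ℂ, the set E'_β has exactly one element if and only if both of the following hold: (a) β = ∑_{i=1}^k c_i a_i + ∑_{j=k+1}^n c_j a_j for some nonnegative integers c_1,…,c_k and some complex numbers c_{k+1},…,c_n; and (b) ℓ_i = 1 for every i ∈ {1,…,k}. (Proposition 9.2, characterizing when the system can have maximal unipotent monodromy at the origin.) -/
/-!
The solutions of `∑ v μ • a μ = β` form the complex line `v₀ + ℂ ℓ` (the relations among the
`a μ` form a real line, hence also a complex one), so the elements of `E'_β` are the points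
`v₀ + t ℓ` with `t` admissible. If every `ℓ i` (`i < k`) is `1` and some `v₀ + t ℓ` has natural
coordinates below `k`, shifting `t` down by the least of them gives the only admissible point.

Conversely, let `t₀` be the only admissible point and `q i = (v₀ + t₀ ℓ) i / ℓ i`. For a candidate
`r = q i - b / ℓ i ≠ 0` (`0 ≤ b < ℓ i`) the point `t₀ - r` satisfies the first condition, so it
violates the second: `r = q j + w / ℓ j` with `w ≥ 1`. A non-natural candidate of least real part
is then impossible, as `q j` and, when `ℓ j > 1`, `q j - 1 / ℓ j` would both be natural. So all
candidates are natural, which forces `ℓ i = 1`.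
-/

open Module Submodule

theorem Function.Injective.existsUnique_exists_eq_and_iff {α β : Type*} {f : α → β}
    (hf : Function.Injective f) {p : β → Prop} :
    (∃! y, (∃ x, y = f x) ∧ p y) ↔ ∃! x, p (f x) := by
  constructor
  · rintro ⟨_, ⟨⟨x, rfl⟩, hx⟩, huniq⟩
    exact ⟨x, hx, fun x' hx' => hf (huniq _ ⟨⟨x', rfl⟩, hx'⟩)⟩
  · rintro ⟨x, hx, huniq⟩
    refine ⟨f x, ⟨⟨x, rfl⟩, hx⟩, ?_⟩
    rintro _ ⟨⟨x', rfl⟩, hx'⟩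
    rw [huniq x' hx']

theorem LinearMap.apply_eq_apply_iff_of_ker_eq_span_singleton {R V W : Type*} [Ring R]
    [AddCommGroup V] [AddCommGroup W] [Module R V] [Module R W] (f : V →ₗ[R] W) {δ : V}
    (hker : LinearMap.ker f = R ∙ δ) (v₀ x : V) :
    f x = f v₀ ↔ ∃ t : R, x = v₀ + t • δ := by
  rw [← sub_eq_zero, ← map_sub, ← LinearMap.mem_ker, hker, mem_span_singleton]
  exact exists_congr fun t => by rw [eq_sub_iff_add_eq, add_comm, eq_comm]

theorem ker_linearCombination_eq_span_singleton {K V ι : Type*} [Field K] [AddCommGroup V]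
    [Module K V] [Fintype ι] (v : ι → V)
    (hrank : finrank K (span K (Set.range v)) = Fintype.card ι - 1)
    {w : ι → K} (hw0 : w ≠ 0) (hw : ∑ i, w i • v i = 0) :
    LinearMap.ker (Fintype.linearCombination K v) = K ∙ w := by
  have hι : 0 < Fintype.card ι := by
    obtain ⟨i, -⟩ := Function.ne_iff.mp hw0
    exact Fintype.card_pos_iff.mpr ⟨i⟩
  have hker : finrank K (LinearMap.ker (Fintype.linearCombination K v)) = 1 := by
    have := (Fintype.linearCombination K v).finrank_range_add_finrank_ker
    rw [Fintype.range_linearCombination, hrank, finrank_fintype_fun_eq_card] at this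
    omega
  symm
  refine Submodule.eq_of_le_of_finrank_eq ?_ (by rw [hker, finrank_span_singleton hw0])
  rw [span_singleton_le_iff_mem, LinearMap.mem_ker, Fintype.linearCombination_apply, hw]

theorem ker_linearCombination_ofReal_eq_span_singleton {ι κ : Type*} [Fintype ι]
    (aR : ι → κ → ℝ) {w : ι → ℝ} (hw : LinearMap.ker (Fintype.linearCombination ℝ aR) = ℝ ∙ w) :
    LinearMap.ker (Fintype.linearCombination ℂ fun i j => (aR i j : ℂ)) =
      ℂ ∙ fun i => (w i : ℂ) := by
  have hker (y : ι → ℝ) (hy : ∀ j, ∑ i, y i * aR i j = 0) : ∃ s : ℝ, s • w = y := by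
    rw [← mem_span_singleton, ← hw, LinearMap.mem_ker, Fintype.linearCombination_apply]
    exact funext fun j => by simpa [Finset.sum_apply] using hy j
  apply le_antisymm
  · intro x hx
    have hxj (j : κ) : ∑ i, x i * aR i j = 0 := by
      simpa [Fintype.linearCombination_apply, Finset.sum_apply] using congrFun hx j
    obtain ⟨s, hs⟩ := hker (fun i => (x i).re) fun j => by
      simpa [Complex.re_sum, Complex.re_mul_ofReal] using congrArg Complex.re (hxj j)
    obtain ⟨s', hs'⟩ := hker (fun i => (x i).im) fun j => by
      simpa [Complex.im_sum, Complex.im_mul_ofReal] using congrArg Complex.im (hxj j)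
    refine mem_span_singleton.mpr ⟨⟨s, s'⟩, funext fun i => Complex.ext ?_ ?_⟩
    · simpa using congrFun hs i
    · simpa using congrFun hs' i
  · have hw0 : ∑ i, w i • aR i = 0 := by
      rw [← Fintype.linearCombination_apply, ← LinearMap.mem_ker, hw]
      exact mem_span_singleton_self w
    rw [span_singleton_le_iff_mem, LinearMap.mem_ker, Fintype.linearCombination_apply]
    funext j
    simpa [Finset.sum_apply] using congrArg Complex.ofReal (congrFun hw0 j)

theorem ker_linearCombination_intCast_eq_span_singleton {ι κ : Type*} [Fintype ι]
    (a : ι → κ → ℤ)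
    (hrank : finrank ℝ (span ℝ (Set.range fun i j => (a i j : ℝ))) = Fintype.card ι - 1)
    {w : ι → ℤ} (hw0 : w ≠ 0) (hw : ∑ i, w i • a i = 0) :
    LinearMap.ker (Fintype.linearCombination ℂ fun i j => (a i j : ℂ)) =
      ℂ ∙ fun i => (w i : ℂ) := by
  have hwR : (fun i => (w i : ℝ)) ≠ 0 := fun h => hw0 (funext fun i => by
    simpa using congrFun h i)
  have hkerR := ker_linearCombination_eq_span_singleton _ hrank hwR (funext fun j => by
    simpa [Finset.sum_apply] using congrArg (Int.cast : ℤ → ℝ) (congrFun hw j))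
  simpa using ker_linearCombination_ofReal_eq_span_singleton _ hkerR

section Admissible

variable {ι : Type*}

-- With `S = {i | i < k}`, `v ∈ E'_β` iff `∑ v μ • a μ = β` and `IsAdmissible S ℓ v`.
def IsAdmissible (S : Finset ι) (ℓ : ι → ℤ) (w : ι → ℂ) : Prop :=
  (∃ i ∈ S, ∃ b : ℕ, (b : ℤ) < ℓ i ∧ w i = b) ∧ ∀ i ∈ S, ∀ m : ℤ, m < 0 → w i ≠ m

theorem natCast_sub_one_div_ne_natCast {ℓ : ℤ} (hℓ : 1 < ℓ) (m m' : ℕ) :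
    (m : ℂ) - 1 / ℓ ≠ m' := by
  intro h
  have hℓ0 : (ℓ : ℂ) ≠ 0 := by exact_mod_cast (by omega : ℓ ≠ 0)
  have : ((m : ℤ) - m') * ℓ = 1 := by
    have : ((m : ℂ) - m') * ℓ = 1 := by
      rw [← h]; field_simp; ring
    exact_mod_cast this
  have := Int.eq_one_or_neg_one_of_mul_eq_one' this
  omega

theorem re_lt_re_add_natCast_div {z : ℂ} {w : ℕ} {ℓ : ℤ} (hw : 0 < w) (hℓ : 0 < ℓ) :
    z.re < (z + w / ℓ).re := by
  have : (0 : ℝ) < w / ℓ := by positivity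
  simpa [Complex.div_intCast_re] using this

theorem exists_natCast_of_descent {S : Finset ι} {ℓ : ι → ℤ} (hℓ : ∀ i ∈ S, 0 < ℓ i)
    (q : ι → ℂ)
    (hdesc : ∀ i ∈ S, ∀ b : ℕ, (b : ℤ) < ℓ i → q i - b / ℓ i ≠ 0 →
      ∃ j ∈ S, ∃ w : ℕ, 0 < w ∧ q i - b / ℓ i = q j + w / ℓ j) :
    ∀ i ∈ S, ∀ b : ℕ, (b : ℤ) < ℓ i → ∃ m : ℕ, q i - b / ℓ i = m := by
  set cand : Set ℂ := ⋃ i ∈ S, (fun b : ℕ => q i - b / ℓ i) '' Set.Iio (ℓ i).toNat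
  have hcand {i} {b : ℕ} (hi : i ∈ S) (hb : (b : ℤ) < ℓ i) : q i - b / ℓ i ∈ cand :=
    Set.mem_biUnion hi ⟨b, Int.lt_toNat.mpr hb, rfl⟩
  have hfin : cand.Finite :=
    (S.finite_toSet).biUnion fun i _ => (Set.finite_Iio _).image _
  by_contra! hbad
  obtain ⟨r, ⟨hr, hrnat⟩, hmin⟩ := Set.exists_min_image {r ∈ cand | ∀ m : ℕ, r ≠ m} Complex.re
    (hfin.subset fun _ h => h.1) (by
      obtain ⟨i, hi, b, hb, h⟩ := hbad
      exact ⟨_, hcand hi hb, h⟩)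
  have hlower {r'} (hr' : r' ∈ cand) (hlt : r'.re < r.re) : ∃ m : ℕ, r' = m := by
    by_contra! h
    exact (hmin r' ⟨hr', h⟩).not_gt hlt
  obtain ⟨i, hi, b, hb, rfl⟩ : ∃ i ∈ S, ∃ b : ℕ, (b : ℤ) < ℓ i ∧ q i - b / ℓ i = r := by
    simpa [cand, Int.lt_toNat] using hr
  obtain ⟨j, hj, w, hw, heq⟩ := hdesc i hi b hb (by simpa using hrnat 0)
  have hlt := heq ▸ re_lt_re_add_natCast_div (z := q j) hw (hℓ j hj)
  obtain ⟨mj, hmj⟩ := hlower (by simpa using hcand hj (b := 0) (hℓ j hj)) hlt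
  rcases (show ℓ j = 1 ∨ 1 < ℓ j by have := hℓ j hj; omega) with h1 | h1
  · exact hrnat (mj + w) (by rw [heq, hmj, h1]; push_cast; ring)
  · have hlt' := re_lt_re_add_natCast_div (z := q j - 1 / ℓ j) one_pos (hℓ j hj)
    rw [Nat.cast_one, sub_add_cancel] at hlt'
    obtain ⟨m', hm'⟩ := hlower (by simpa using hcand hj (b := 1) h1) (hlt'.trans hlt)
    exact natCast_sub_one_div_ne_natCast h1 mj m' (hmj ▸ hm')

section Line

variable {S : Finset ι} {ℓ : ι → ℤ} {v δ : ι → ℂ}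

theorem forall_eq_one_and_natCast_of_unique_isAdmissible (hℓ : ∀ i ∈ S, 0 < ℓ i)
    (hδ : ∀ i ∈ S, δ i = ℓ i) {t₀ : ℂ} (huniq : ∀ t, IsAdmissible S ℓ (v + t • δ) → t = t₀) :
    ∀ i ∈ S, ℓ i = 1 ∧ ∃ b : ℕ, (v + t₀ • δ) i = b := by
  have hℓ0 {i} (hi : i ∈ S) : (ℓ i : ℂ) ≠ 0 := by exact_mod_cast (hℓ i hi).ne'
  set q : ι → ℂ := fun i => (v + t₀ • δ) i / ℓ i
  have hcoord (r : ℂ) {i} (hi : i ∈ S) : (v + (t₀ - r) • δ) i = ℓ i * (q i - r) := by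
    simp only [q, Pi.add_apply, Pi.smul_apply, smul_eq_mul, hδ i hi]
    field_simp [hℓ0 hi]
    ring
  have hnat := exists_natCast_of_descent hℓ q fun i hi b hb hr0 => by
    set r := q i - b / ℓ i with hr
    have hne : t₀ - r ≠ t₀ := by simpa using hr0
    have hfirst : ∃ i' ∈ S, ∃ b' : ℕ, (b' : ℤ) < ℓ i' ∧ (v + (t₀ - r) • δ) i' = b' :=
      ⟨i, hi, b, hb, by rw [hcoord _ hi, hr, sub_sub_cancel, mul_div_cancel₀ _ (hℓ0 hi)]⟩
    obtain ⟨j, hj, m, hm, hjm⟩ : ∃ j ∈ S, ∃ m : ℤ, m < 0 ∧ (v + (t₀ - r) • δ) j = m := by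
      by_contra! h
      exact hne (huniq _ ⟨hfirst, fun j hj m hm => h j hj m hm⟩)
    refine ⟨j, hj, (-m).toNat, by omega, ?_⟩
    rw [hcoord _ hj] at hjm
    have : (((-m).toNat : ℤ) : ℂ) = -m := by rw [Int.toNat_of_nonneg (by omega)]; push_cast; rfl
    rw [show (((-m).toNat : ℕ) : ℂ) = (((-m).toNat : ℤ) : ℂ) by norm_cast, this]
    field_simp [hℓ0 hj]
    linear_combination -hjm
  intro i hi
  obtain ⟨m, hm⟩ := hnat i hi 0 (hℓ i hi)
  rw [Nat.cast_zero, zero_div, sub_zero] at hm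
  have hℓi : ℓ i = 1 := by
    by_contra h
    have h1 : 1 < ℓ i := by have := hℓ i hi; omega
    obtain ⟨m', hm'⟩ := hnat i hi 1 h1
    exact natCast_sub_one_div_ne_natCast h1 m m' (by simpa [hm] using hm')
  refine ⟨hℓi, m, ?_⟩
  simpa [q, hℓi] using hm

theorem existsUnique_isAdmissible_of_natCast (hS : S.Nonempty) (hℓ : ∀ i ∈ S, ℓ i = 1)
    (hδ : ∀ i ∈ S, δ i = ℓ i) {t : ℂ} (ht : ∀ i ∈ S, ∃ b : ℕ, (v + t • δ) i = b) :
    ∃! t : ℂ, IsAdmissible S ℓ (v + t • δ) := by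
  choose! B hB using ht
  obtain ⟨i₀, hi₀, hmin⟩ := S.exists_min_image B hS
  have hcoord (s : ℂ) {i} (hi : i ∈ S) : (v + (t - s) • δ) i = B i - s := by
    rw [← hB i hi]
    simp only [Pi.add_apply, Pi.smul_apply, smul_eq_mul, hδ i hi, hℓ i hi, Int.cast_one, mul_one]
    ring
  refine ⟨t - B i₀, ⟨⟨i₀, hi₀, 0, by simp [hℓ i₀ hi₀], by simp [hcoord _ hi₀]⟩, ?_⟩, ?_⟩
  · intro i hi m hm h
    rw [hcoord _ hi] at h
    have : (B i : ℤ) - B i₀ = m := by exact_mod_cast h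
    have := hmin i hi
    omega
  · rintro t' ⟨⟨i, hi, b, hb, hib⟩, hneg⟩
    have hb0 : b = 0 := by have := hℓ i hi; omega
    have ht' : t' = t - B i := by
      have := hcoord (t - t') hi
      rw [sub_sub_cancel, hib, hb0] at this
      linear_combination -this
    subst ht'
    have : B i ≤ B i₀ := by
      by_contra! hlt
      refine hneg i₀ hi₀ ((B i₀ : ℤ) - B i) (by omega) ?_
      rw [hcoord _ hi₀]
      push_cast
      ring
    rw [le_antisymm this (hmin i hi)]

theorem existsUnique_isAdmissible_iff (hS : S.Nonempty) (hℓ : ∀ i ∈ S, 0 < ℓ i)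
    (hδ : ∀ i ∈ S, δ i = ℓ i) :
    (∃! t : ℂ, IsAdmissible S ℓ (v + t • δ)) ↔
      (∃ t : ℂ, ∀ i ∈ S, ∃ b : ℕ, (v + t • δ) i = b) ∧ ∀ i ∈ S, ℓ i = 1 := by
  refine ⟨fun ⟨t₀, _, huniq⟩ => ?_, fun ⟨⟨t, ht⟩, hℓ1⟩ =>
    existsUnique_isAdmissible_of_natCast hS hℓ1 hδ ht⟩
  have h := forall_eq_one_and_natCast_of_unique_isAdmissible hℓ hδ huniq
  exact ⟨⟨t₀, fun i hi => (h i hi).2⟩, fun i hi => (h i hi).1⟩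

end Line

end Admissible

theorem stmt_18_general (d n k : ℕ) (hk1 : 1 ≤ k) (hkn : k ≤ n)
    (a : Fin n → Fin d → ℤ)
    (aR : Fin n → Fin d → ℝ) (haR : ∀ μ i, aR μ i = (a μ i : ℝ))
    (hdim : Module.finrank ℝ (Submodule.span ℝ (Set.range aR)) = n - 1)
    (ℓ : Fin n → ℤ) (hℓpos : ∀ μ, 0 < ℓ μ)
    (ℓs : Fin n → ℤ) (hℓs : ∀ μ : Fin n, ℓs μ = if (μ : ℕ) < k then ℓ μ else -ℓ μ)
    (hlat : ∀ l : Fin n → ℤ, (∑ μ, l μ • a μ) = 0 ↔ ∃ z : ℤ, l = z • ℓs)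
    (aC : Fin n → Fin d → ℂ) (haC : ∀ μ i, aC μ i = (a μ i : ℂ))
    (E E' : (Fin d → ℂ) → Set (Fin n → ℂ))
    (hE : ∀ (γ : Fin d → ℂ) (v : Fin n → ℂ), v ∈ E γ ↔
      (∑ μ, v μ • aC μ) = γ ∧
        ∃ i : Fin n, (i : ℕ) < k ∧ ∃ b : ℕ, (b : ℤ) < ℓ i ∧ v i = (b : ℂ))
    (hE' : ∀ (γ : Fin d → ℂ) (v : Fin n → ℂ), v ∈ E' γ ↔
      v ∈ E γ ∧ ∀ i : Fin n, (i : ℕ) < k → ∀ m : ℤ, m < 0 → v i ≠ (m : ℂ))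
    (β : Fin d → ℂ) (hβ : β ∈ Submodule.span ℂ (Set.range aC))
    : (∃! v : Fin n → ℂ, v ∈ E' β) ↔
      ((∃ c : Fin n → ℂ, β = (∑ μ, c μ • aC μ) ∧
          ∀ i : Fin n, (i : ℕ) < k → ∃ b : ℕ, c i = (b : ℂ)) ∧
        ∀ i : Fin n, (i : ℕ) < k → ℓ i = 1) := by
  set S := Finset.univ.filter fun i : Fin n => (i : ℕ) < k
  have hmemS (i : Fin n) : i ∈ S ↔ (i : ℕ) < k := by simp [S]
  obtain ⟨i₀, hi₀⟩ : S.Nonempty := ⟨⟨0, by omega⟩, (hmemS _).2 hk1⟩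
  set δ : Fin n → ℂ := fun μ => (ℓs μ : ℂ)
  have hδ : ∀ i ∈ S, δ i = ℓ i := fun i hi => by simp [δ, hℓs, (hmemS i).1 hi]
  have hδ0 : δ ≠ 0 := fun h => by simpa [hδ i₀ hi₀, (hℓpos i₀).ne'] using congrFun h i₀
  have hkerC : LinearMap.ker (Fintype.linearCombination ℂ aC) = ℂ ∙ δ := by
    obtain rfl : aR = _ := funext₂ haR
    obtain rfl : aC = _ := funext₂ haC
    exact ker_linearCombination_intCast_eq_span_singleton a (by simpa using hdim)
      (fun h => hδ0 (funext fun μ => by simp [δ, h])) ((hlat ℓs).2 ⟨1, (one_smul _ _).symm⟩)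
  obtain ⟨v₀, hv₀⟩ := (mem_span_range_iff_exists_fun ℂ).mp hβ
  have hline (x : Fin n → ℂ) : ∑ μ, x μ • aC μ = β ↔ ∃ t : ℂ, x = v₀ + t • δ := by
    simpa [Fintype.linearCombination_apply, hv₀] using
      (Fintype.linearCombination ℂ aC).apply_eq_apply_iff_of_ker_eq_span_singleton hkerC v₀ x
  have hE'β (x : Fin n → ℂ) : x ∈ E' β ↔ (∃ t : ℂ, x = v₀ + t • δ) ∧ IsAdmissible S ℓ x := by
    simp only [hE', hE, hline, IsAdmissible, hmemS, and_assoc]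
  have hinj : Function.Injective fun t : ℂ => v₀ + t • δ :=
    (add_right_injective v₀).comp (smul_left_injective ℂ hδ0)
  rw [existsUnique_congr hE'β, hinj.existsUnique_exists_eq_and_iff,
    existsUnique_isAdmissible_iff ⟨i₀, hi₀⟩ (fun i _ => hℓpos i) hδ]
  simp only [hmemS]
  refine and_congr ⟨fun ⟨t, ht⟩ => ⟨v₀ + t • δ, ((hline _).2 ⟨t, rfl⟩).symm, ht⟩, ?_⟩ Iff.rfl
  rintro ⟨c, hc, hcnat⟩
  obtain ⟨t, rfl⟩ := (hline c).1 hc.symm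
  exact ⟨t, hcnat⟩

/-- Proposition 9.2: E'_β is a singleton iff β ∈ ∑_{i≤k} ℤ_{≥0} a_i + ∑_{j>k} ℂ a_j and ℓ_i = 1 for all i ≤ k. -/
theorem stmt_18 (d n k : ℕ) (hd : 1 ≤ d) (hn : 2 ≤ n) (hk1 : 1 ≤ k) (hkn : k ≤ n)
    (a : Fin n → Fin d → ℤ)
    (aR : Fin n → Fin d → ℝ) (haR : ∀ μ i, aR μ i = (a μ i : ℝ))
    (hdim : Module.finrank ℝ (Submodule.span ℝ (Set.range aR)) = n - 1)
    (hindep : ∀ μ₀ : Fin n,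
      LinearIndependent ℝ (fun ν : {ν : Fin n // ν ≠ μ₀} => aR ν.1))
    (ℓ : Fin n → ℤ) (hℓpos : ∀ μ, 0 < ℓ μ)
    (ℓs : Fin n → ℤ) (hℓs : ∀ μ : Fin n, ℓs μ = if (μ : ℕ) < k then ℓ μ else -ℓ μ)
    (hlat : ∀ l : Fin n → ℤ, (∑ μ, l μ • a μ) = 0 ↔ ∃ z : ℤ, l = z • ℓs)
    (aC : Fin n → Fin d → ℂ) (haC : ∀ μ i, aC μ i = (a μ i : ℂ))
    (E E' : (Fin d → ℂ) → Set (Fin n → ℂ))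
    (hE : ∀ (γ : Fin d → ℂ) (v : Fin n → ℂ), v ∈ E γ ↔
      (∑ μ, v μ • aC μ) = γ ∧
        ∃ i : Fin n, (i : ℕ) < k ∧ ∃ b : ℕ, (b : ℤ) < ℓ i ∧ v i = (b : ℂ))
    (hE' : ∀ (γ : Fin d → ℂ) (v : Fin n → ℂ), v ∈ E' γ ↔
      v ∈ E γ ∧ ∀ i : Fin n, (i : ℕ) < k → ∀ m : ℤ, m < 0 → v i ≠ (m : ℂ))
    (β : Fin d → ℂ) (hβ : β ∈ Submodule.span ℂ (Set.range aC))
    : (∃! v : Fin n → ℂ, v ∈ E' β) ↔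
      ((∃ c : Fin n → ℂ, β = (∑ μ, c μ • aC μ) ∧
          ∀ i : Fin n, (i : ℕ) < k → ∃ b : ℕ, c i = (b : ℂ)) ∧
        ∀ i : Fin n, (i : ℕ) < k → ℓ i = 1) :=
  stmt_18_general d n k hk1 hkn a aR haR hdim ℓ hℓpos ℓs hℓs hlat aC haC E E' hE hE' β hβ
end
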